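/- arXiv:2007.10592 — 2 statements merged into one kernel-verified Lean document; each statement's English description precedes it below -/
import Mathlib

section
/- If x and x' are binary strings of length n that both contain y ∈ {0,1}^{n−2} as a subsequence obtained by deleting two 1's, and f1(x) = f1(x') and f2(x) = f2(x'), then x = x'. -/
open List Finset

def f1 (z : List Bool) : ℕ := ∑ i ∈ Finset.range z.length, (i + 1) * (z.getD i false).toNat

def f2 (z : List Bool) : ℕ := ∑ i ∈ Finset.range z.length, (i + 1).choose 2 * (z.getD i false).toNat

def pad (z : List Bool) : List Bool := (false :: z) ++ [true]

/-- run number (rank) of position `i` (0-indexed in the padded string). -/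
def runRank (z : List Bool) (i : ℕ) : ℕ :=
  ((Finset.range i).filter (fun j => (pad z).getD (j + 1) true ≠ (pad z).getD j true)).card

def f1r (z : List Bool) : ℕ := ∑ i ∈ Finset.Icc 1 (z.length + 1), runRank z i

def f2r (z : List Bool) : ℕ := ∑ i ∈ Finset.Icc 1 (z.length + 1), (runRank z i).choose 2

def numRuns (z : List Bool) : ℕ := runRank z (z.length + 1)

def ones (z : List Bool) : ℕ := z.count true
def zb (z : List Bool) (a : ℕ) : ℕ := ∑ i ∈ Finset.range a, (1 - (z.getD i false).toNat)
def Zf (z : List Bool) (a : ℕ) : ℕ := ∑ i ∈ Finset.range a, (i + 1) * (1 - (z.getD i false).toNat)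

lemma ones_cons (c : Bool) (t : List Bool) : ones (c :: t) = c.toNat + ones t := by
  cases c <;> simp [ones, List.count_cons] <;> omega

lemma ones_eq_sum (t : List Bool) :
    (∑ i ∈ Finset.range t.length, (t.getD i false).toNat) = ones t := by
  induction t with
  | nil => simp [ones]
  | cons c t ih =>
    rw [List.length_cons, Finset.sum_range_succ']
    simp only [List.getD_cons_succ, List.getD_cons_zero]
    rw [ih, ones_cons]; omega

lemma f1_cons (c : Bool) (t : List Bool) : f1 (c :: t) = c.toNat + ones t + f1 t := by
  unfold f1
  rw [List.length_cons, Finset.sum_range_succ']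
  simp only [List.getD_cons_succ, List.getD_cons_zero]
  have h : ∀ i ∈ Finset.range t.length,
      (i + 1 + 1) * (t.getD i false).toNat
        = (i + 1) * (t.getD i false).toNat + (t.getD i false).toNat := by
    intro i _; ring
  rw [Finset.sum_congr rfl h, Finset.sum_add_distrib, ones_eq_sum]
  omega

lemma f2_cons (c : Bool) (t : List Bool) : f2 (c :: t) = f1 t + f2 t := by
  unfold f2 f1
  rw [List.length_cons, Finset.sum_range_succ']
  simp only [List.getD_cons_succ, List.getD_cons_zero]
  have h : ∀ i ∈ Finset.range t.length,
      (i + 1 + 1).choose 2 * (t.getD i false).toNat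
        = (i + 1) * (t.getD i false).toNat + (i + 1).choose 2 * (t.getD i false).toNat := by
    intro i _
    have : (i + 1 + 1).choose 2 = (i + 1).choose 1 + (i + 1).choose 2 := Nat.choose_succ_succ _ _
    rw [this, Nat.choose_one_right, Nat.add_mul]
  rw [Finset.sum_congr rfl h, Finset.sum_add_distrib]
  simp [Nat.choose]

lemma zb_zero (z : List Bool) : zb z 0 = 0 := by simp [zb]

lemma zb_succ (c : Bool) (t : List Bool) (a : ℕ) :
    zb (c :: t) (a + 1) = (1 - c.toNat) + zb t a := by
  unfold zb
  rw [Finset.sum_range_succ']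
  simp only [List.getD_cons_succ, List.getD_cons_zero]
  omega

lemma Zf_zero (z : List Bool) : Zf z 0 = 0 := by simp [Zf]

lemma Zf_succ (c : Bool) (t : List Bool) (a : ℕ) :
    Zf (c :: t) (a + 1) = (1 - c.toNat) + (Zf t a + zb t a) := by
  unfold Zf zb
  rw [Finset.sum_range_succ']
  simp only [List.getD_cons_succ, List.getD_cons_zero]
  have h : ∀ i ∈ Finset.range a,
      (i + 1 + 1) * (1 - (t.getD i false).toNat)
        = (i + 1) * (1 - (t.getD i false).toNat) + (1 - (t.getD i false).toNat) := by
    intro i _; ring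
  rw [Finset.sum_congr rfl h, Finset.sum_add_distrib]
  omega

lemma ones_insertIdx {z : List Bool} {i : ℕ} (h : i ≤ z.length) :
    ones (z.insertIdx i true) = ones z + 1 := by
  unfold ones
  rw [(List.perm_insertIdx true z h).count_eq]
  simp [List.count_cons]

lemma toNat_le (c : Bool) : c.toNat ≤ 1 := by cases c <;> simp

lemma f1_insertIdx : ∀ (i : ℕ) (z : List Bool), i ≤ z.length →
    f1 (z.insertIdx i true) = f1 z + ones z + 1 + zb z i
  | 0, z, _ => by
    rw [List.insertIdx_zero, f1_cons, zb_zero]; simp [Bool.toNat]; omega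
  | i + 1, [], h => absurd h (by simp)
  | i + 1, c :: t, h => by
    have h' : i ≤ t.length := by simpa using h
    rw [List.insertIdx_succ_cons, f1_cons, ones_insertIdx h', f1_insertIdx i t h',
      f1_cons, ones_cons, zb_succ]
    have := toNat_le c
    omega

lemma f2_insertIdx : ∀ (i : ℕ) (z : List Bool), i ≤ z.length →
    f2 (z.insertIdx i true) = f2 z + f1 z + Zf z i
  | 0, z, _ => by
    rw [List.insertIdx_zero, f2_cons, Zf_zero]; omega
  | i + 1, [], h => absurd h (by simp)
  | i + 1, c :: t, h => by
    have h' : i ≤ t.length := by simpa using h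
    rw [List.insertIdx_succ_cons, f2_cons, f1_insertIdx i t h', f2_insertIdx i t h',
      f2_cons, f1_cons, Zf_succ]
    have := toNat_le c
    omega

lemma zb_insertIdx : ∀ (a b : ℕ) (z : List Bool), a ≤ b → a ≤ z.length →
    zb (z.insertIdx a true) (b + 1) = zb z b
  | 0, b, z, _, _ => by rw [List.insertIdx_zero, zb_succ]; simp
  | a + 1, 0, _, hab, _ => absurd hab (by omega)
  | a + 1, b + 1, [], _, hlen => absurd hlen (by simp)
  | a + 1, b + 1, c :: t, hab, hlen => by
    rw [List.insertIdx_succ_cons, zb_succ, zb_succ,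
      zb_insertIdx a b t (by omega) (by simpa using hlen)]

lemma Zf_insertIdx : ∀ (a b : ℕ) (z : List Bool), a ≤ b → a ≤ z.length →
    Zf (z.insertIdx a true) (b + 1) + zb z a = Zf z b + zb z b
  | 0, b, z, _, _ => by rw [List.insertIdx_zero, Zf_succ, zb_zero]; simp
  | a + 1, 0, _, hab, _ => absurd hab (by omega)
  | a + 1, b + 1, [], _, hlen => absurd hlen (by simp)
  | a + 1, b + 1, c :: t, hab, hlen => by
    have h1 : a ≤ t.length := by simpa using hlen
    have h2 : a ≤ b := by omega
    have ih := Zf_insertIdx a b t h2 h1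
    rw [List.insertIdx_succ_cons, Zf_succ, zb_succ, Zf_succ, zb_succ,
      zb_insertIdx a b t h2 h1]
    omega

lemma zb_split (z : List Bool) (p q : ℕ) (h : p ≤ q) :
    zb z q = zb z p + ∑ i ∈ Finset.Ico p q, (1 - (z.getD i false).toNat) := by
  unfold zb
  rw [Finset.range_eq_Ico, ← Finset.sum_Ico_consecutive _ (Nat.zero_le p) h, ← Finset.range_eq_Ico]

lemma Zf_split (z : List Bool) (p q : ℕ) (h : p ≤ q) :
    Zf z q = Zf z p + ∑ i ∈ Finset.Ico p q, (i + 1) * (1 - (z.getD i false).toNat) := by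
  unfold Zf
  rw [Finset.range_eq_Ico, ← Finset.sum_Ico_consecutive _ (Nat.zero_le p) h, ← Finset.range_eq_Ico]

lemma zb_mono (z : List Bool) {p q : ℕ} (h : p ≤ q) : zb z p ≤ zb z q := by
  rw [zb_split z p q h]; omega

lemma Zf_mono (z : List Bool) {p q : ℕ} (h : p ≤ q) : Zf z p ≤ Zf z q := by
  rw [Zf_split z p q h]; omega

lemma zb_step (z : List Bool) (q : ℕ) : zb z (q + 1) ≤ zb z q + 1 := by
  unfold zb
  rw [Finset.sum_range_succ]
  omega

lemma Zf_le1 (z : List Bool) {p q : ℕ} (h : p ≤ q) :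
    Zf z q + q * zb z p ≤ Zf z p + q * zb z q := by
  rw [Zf_split z p q h, zb_split z p q h, Nat.mul_add]
  have key : (∑ i ∈ Finset.Ico p q, (i + 1) * (1 - (z.getD i false).toNat))
      ≤ q * ∑ i ∈ Finset.Ico p q, (1 - (z.getD i false).toNat) := by
    rw [Finset.mul_sum]
    refine Finset.sum_le_sum fun i hi => ?_
    have : i < q := (Finset.mem_Ico.mp hi).2
    exact Nat.mul_le_mul_right _ (by omega)
  omega

lemma Zf_le2 (z : List Bool) {r s : ℕ} (h : r ≤ s) :
    Zf z r + (r + 1) * zb z s ≤ Zf z s + (r + 1) * zb z r := by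
  rw [Zf_split z r s h, zb_split z r s h, Nat.mul_add]
  have key : ((r + 1) * ∑ i ∈ Finset.Ico r s, (1 - (z.getD i false).toNat))
      ≤ ∑ i ∈ Finset.Ico r s, (i + 1) * (1 - (z.getD i false).toNat) := by
    rw [Finset.mul_sum]
    refine Finset.sum_le_sum fun i hi => ?_
    have : r ≤ i := (Finset.mem_Ico.mp hi).1
    exact Nat.mul_le_mul_right _ (by omega)
  omega

lemma Zf_congr (z : List Bool) {p q : ℕ} (h : zb z p = zb z q) : Zf z p = Zf z q := by
  rcases le_total p q with hpq | hpq
  · have h1 := Zf_le1 z hpq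
    have h2 := Zf_mono z hpq
    rw [h] at h1
    omega
  · have h1 := Zf_le1 z hpq
    have h2 := Zf_mono z hpq
    rw [← h] at h1
    omega

lemma zb_ivt : ∀ (q g : ℕ) (z : List Bool), g ≤ zb z q → ∃ p, p ≤ q ∧ zb z p = g
  | 0, g, z, h => ⟨0, le_refl _, by rw [zb_zero] at h ⊢; omega⟩
  | q + 1, g, z, h => by
    by_cases h' : g ≤ zb z q
    · obtain ⟨p, hp, hg⟩ := zb_ivt q g z h'
      exact ⟨p, by omega, hg⟩
    · exact ⟨q + 1, le_refl _, by have := zb_step z q; omega⟩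

lemma insert_eq_of_zb : ∀ (z : List Bool) (p q : ℕ), p ≤ q → q ≤ z.length →
    zb z p = zb z q → z.insertIdx p true = z.insertIdx q true
  | _, p, 0, hpq, _, _ => by rw [Nat.le_zero.mp hpq]
  | [], _, q + 1, _, hq, _ => absurd hq (by simp)
  | c :: t, 0, q + 1, _, hq, hzb => by
    rw [zb_zero, zb_succ] at hzb
    cases c with
    | false => rw [show (false : Bool).toNat = 0 from rfl] at hzb; omega
    | true =>
      have h0 : t.insertIdx 0 true = t.insertIdx q true :=
        insert_eq_of_zb t 0 q (Nat.zero_le _) (by simpa using hq)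
          (by rw [zb_zero]; omega)
      rw [List.insertIdx_succ_cons, ← h0]
      rfl
  | c :: t, p + 1, q + 1, hpq, hq, hzb => by
    rw [zb_succ, zb_succ] at hzb
    rw [List.insertIdx_succ_cons, List.insertIdx_succ_cons,
      insert_eq_of_zb t p q (by omega) (by simpa using hq) (by omega)]

lemma insert_eq' (z : List Bool) (p q : ℕ) (hp : p ≤ z.length) (hq : q ≤ z.length)
    (h : zb z p = zb z q) : z.insertIdx p true = z.insertIdx q true := by
  rcases le_total p q with hpq | hpq
  · exact insert_eq_of_zb z p q hpq hq h
  · exact (insert_eq_of_zb z q p hpq hp h.symm).symm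

lemma normalizeIns {y x : List Bool}
    (h : ∃ i j, i ≤ y.length ∧ j ≤ y.length + 1 ∧ x = (y.insertIdx i true).insertIdx j true) :
    ∃ a b, a ≤ b ∧ b ≤ y.length ∧ x = (y.insertIdx a true).insertIdx (b + 1) true := by
  obtain ⟨i, j, hi, hj, hx⟩ := h
  rcases le_or_gt j i with hji | hji
  · exact ⟨j, i, hji, hi, by rw [hx, ← List.insertIdx_comm true true hji hi]⟩
  · refine ⟨i, j - 1, by omega, by omega, ?_⟩
    rw [Nat.sub_add_cancel (by omega : 1 ≤ j)]
    exact hx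

lemma f1_two {y : List Bool} {a b : ℕ} (hab : a ≤ b) (hb : b ≤ y.length) :
    f1 ((y.insertIdx a true).insertIdx (b + 1) true)
      = f1 y + 2 * ones y + 3 + zb y a + zb y b := by
  have ha : a ≤ y.length := hab.trans hb
  have hlen : (y.insertIdx a true).length = y.length + 1 := List.length_insertIdx_of_le_length ha true
  rw [f1_insertIdx (b + 1) _ (by omega), f1_insertIdx a y ha, ones_insertIdx ha,
    zb_insertIdx a b y hab ha]
  omega

lemma f2_two {y : List Bool} {a b : ℕ} (hab : a ≤ b) (hb : b ≤ y.length) :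
    f2 ((y.insertIdx a true).insertIdx (b + 1) true)
      = f2 y + 2 * f1 y + ones y + 1 + Zf y a + Zf y b + zb y b := by
  have ha : a ≤ y.length := hab.trans hb
  have hlen : (y.insertIdx a true).length = y.length + 1 := List.length_insertIdx_of_le_length ha true
  have hZ := Zf_insertIdx a b y hab ha
  rw [f2_insertIdx (b + 1) _ (by omega), f2_insertIdx a y ha, f1_insertIdx a y ha]
  omega

lemma core_aux {y : List Bool} {a b a' b' : ℕ}
    (hab : a ≤ b) (hb : b ≤ y.length) (hab' : a' ≤ b') (hb' : b' ≤ y.length)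
    (e1 : zb y a + zb y b = zb y a' + zb y b')
    (e2 : Zf y a + Zf y b + zb y b = Zf y a' + Zf y b' + zb y b')
    (hv : zb y b' ≤ zb y b) :
    zb y a = zb y a' ∧ zb y b = zb y b' := by
  have huv' : zb y a' ≤ zb y b' := zb_mono y hab'
  have hu : zb y a ≤ zb y a' := by omega
  obtain ⟨r, hrb, hr⟩ := zb_ivt b (zb y b') y hv
  obtain ⟨q, hqr, hq⟩ := zb_ivt r (zb y a') y (by omega)
  obtain ⟨p, hpq, hp⟩ := zb_ivt q (zb y a) y (by omega)
  have hZp : Zf y p = Zf y a := Zf_congr y (by omega)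
  have hZq : Zf y q = Zf y a' := Zf_congr y (by omega)
  have hZr : Zf y r = Zf y b' := Zf_congr y (by omega)
  set d := zb y a' - zb y a with hd
  have h1 := Zf_le1 y hpq
  have hq' : zb y q = zb y p + d := by omega
  rw [hq', Nat.mul_add] at h1
  have hA : Zf y q ≤ Zf y p + q * d := by omega
  have h2 := Zf_le2 y hrb
  have hb'' : zb y b = zb y r + d := by omega
  rw [hb'', Nat.mul_add] at h2
  have hB : Zf y r + (r + 1) * d ≤ Zf y b := by omega
  have h5 : q * d ≤ (r + 1) * d := Nat.mul_le_mul_right _ (by omega)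
  have h6 : d ≤ (r + 1) * d := Nat.le_mul_of_pos_left d (by omega)
  rw [← hZp, ← hZq, ← hZr] at e2
  omega

lemma core {y : List Bool} {a b a' b' : ℕ}
    (hab : a ≤ b) (hb : b ≤ y.length) (hab' : a' ≤ b') (hb' : b' ≤ y.length)
    (e1 : zb y a + zb y b = zb y a' + zb y b')
    (e2 : Zf y a + Zf y b + zb y b = Zf y a' + Zf y b' + zb y b') :
    zb y a = zb y a' ∧ zb y b = zb y b' := by
  rcases le_total (zb y b') (zb y b) with hv | hv
  · exact core_aux hab hb hab' hb' e1 e2 hv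
  · obtain ⟨h1, h2⟩ := core_aux hab' hb' hab hb e1.symm e2.symm hv
    exact ⟨h1.symm, h2.symm⟩


/-- If both `x` and `x'` arise from `y` by inserting two `1`'s, and they share
the values of `f1` and `f2`, then `x = x'`. -/
theorem two_one_deletions_unique (y x x' : List Bool)
    (hx : ∃ i j, i ≤ y.length ∧ j ≤ y.length + 1 ∧
      x = (y.insertIdx i true).insertIdx j true)
    (hx' : ∃ i j, i ≤ y.length ∧ j ≤ y.length + 1 ∧
      x' = (y.insertIdx i true).insertIdx j true)
    (hf1 : f1 x = f1 x') (hf2 : f2 x = f2 x') :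
    x = x' := by
  obtain ⟨a, b, hab, hb, hxe⟩ := normalizeIns hx
  obtain ⟨a', b', hab', hb', hxe'⟩ := normalizeIns hx'
  rw [hxe, hxe', f1_two hab hb, f1_two hab' hb'] at hf1
  rw [hxe, hxe', f2_two hab hb, f2_two hab' hb'] at hf2
  have e1 : zb y a + zb y b = zb y a' + zb y b' := by omega
  have e2 : Zf y a + Zf y b + zb y b = Zf y a' + Zf y b' + zb y b' := by omega
  obtain ⟨eu, ev⟩ := core hab hb hab' hb' e1 e2
  have hw : y.insertIdx a true = y.insertIdx a' true :=
    insert_eq' y a a' (hab.trans hb) (hab'.trans hb') eu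
  have h1 := zb_insertIdx a b y hab (hab.trans hb)
  rw [hw] at h1
  have h2 := zb_insertIdx a' b' y hab' (hab'.trans hb')
  have hlen : (y.insertIdx a' true).length = y.length + 1 :=
    List.length_insertIdx_of_le_length (hab'.trans hb') true
  rw [hxe, hxe', hw]
  exact insert_eq' _ (b + 1) (b' + 1) (by omega) (by omega) (by omega)
end

section
/- If x and x' are binary strings of length n that both contain y ∈ {0,1}^{n−2} as a subsequence obtained by two deletions, neither pair of inserted bits creates any new run, and f1^r(x) = f1^r(x') and f2^r(x) = f2^r(x'), then x = x'. -/
open List Finset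

def rk (w : List Bool) (i : ℕ) : ℕ :=
  ((Finset.range i).filter (fun j => w.getD (j + 1) true ≠ w.getD j true)).card

def dupAt (w : List Bool) (k : ℕ) : List Bool := w.take (k+1) ++ w.drop k
def insAt (w : List Bool) (k : ℕ) (c : Bool) : List Bool := w.take k ++ c :: w.drop k

lemma rk_zero (w : List Bool) : rk w 0 = 0 := by simp [rk]

lemma rk_succ (w : List Bool) (i : ℕ) :
    rk w (i+1) = rk w i + (if w.getD (i+1) true ≠ w.getD i true then 1 else 0) := by
  unfold rk
  rw [Finset.range_add_one, Finset.filter_insert]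
  split <;> simp [Finset.card_insert_of_notMem, add_comm]

lemma rk_mono (w : List Bool) : Monotone (rk w) := by
  apply monotone_nat_of_le_succ
  intro i
  rw [rk_succ]
  split <;> omega

lemma rk_le_succ (w : List Bool) (i : ℕ) : rk w (i+1) ≤ rk w i + 1 := by
  rw [rk_succ]; split <;> omega

lemma rk_congr {w w' : List Bool} {i : ℕ}
    (h : ∀ j < i, (w'.getD (j+1) true ≠ w'.getD j true) ↔ (w.getD (j+1) true ≠ w.getD j true)) :
    rk w' i = rk w i := by
  unfold rk
  congr 1
  apply Finset.filter_congr
  intro j hj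
  simp only [Finset.mem_range] at hj
  have := h j hj
  simp only [List.getD_eq_getElem?_getD] at this ⊢
  exact not_congr (by tauto)

/-- intermediate value -/
lemma rk_ivt (w : List Bool) (n t : ℕ) (h : t ≤ rk w n) : ∃ k ≤ n, rk w k = t := by
  induction n with
  | zero => exact ⟨0, le_refl _, by rw [rk_zero] at h ⊢; omega⟩
  | succ n ih =>
    by_cases h' : t ≤ rk w n
    · obtain ⟨k, hk, hk'⟩ := ih h'
      exact ⟨k, by omega, hk'⟩
    · refine ⟨n+1, le_refl _, ?_⟩
      have := rk_le_succ w n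
      omega

section X
variable {w : List Bool}

lemma getD_take {k j : ℕ} (d : Bool) (h : j < k) : (w.take k).getD j d = w.getD j d := by
  simp [List.getD_eq_getElem?_getD, List.getElem?_take, h]

lemma getD_drop (k j : ℕ) (d : Bool) : (w.drop k).getD j d = w.getD (k + j) d := by
  simp [List.getD_eq_getElem?_getD, List.getElem?_drop]

lemma length_dupAt {k : ℕ} (hk : k < w.length) : (dupAt w k).length = w.length + 1 := by
  simp [dupAt]
  omega

lemma length_insAt {k : ℕ} (c : Bool) (hk : k ≤ w.length) : (insAt w k c).length = w.length + 1 := by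
  simp [insAt]
  omega

lemma getD_dupAt_le {k j : ℕ} (d : Bool) (hk : k < w.length) (h : j ≤ k) :
    (dupAt w k).getD j d = w.getD j d := by
  rw [dupAt, List.getD_append]
  · exact getD_take d (by omega)
  · rw [List.length_take]; omega

lemma getD_dupAt_ge {k j : ℕ} (d : Bool) (hk : k < w.length) (h : k + 1 ≤ j) :
    (dupAt w k).getD j d = w.getD (j - 1) d := by
  rw [dupAt, List.getD_append_right, List.length_take, getD_drop]
  · congr 1; omega
  · rw [List.length_take]; omega

lemma getD_insAt_lt {k j : ℕ} {c : Bool} (d : Bool) (hk : k ≤ w.length) (h : j < k) :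
    (insAt w k c).getD j d = w.getD j d := by
  rw [insAt, List.getD_append]
  · exact getD_take d h
  · rw [List.length_take]; omega

lemma getD_insAt_self {k : ℕ} {c : Bool} (d : Bool) (hk : k ≤ w.length) :
    (insAt w k c).getD k d = c := by
  rw [insAt, List.getD_append_right, List.length_take]
  · simp [min_eq_left hk]
  · rw [List.length_take]; omega

lemma getD_insAt_gt {k j : ℕ} {c : Bool} (d : Bool) (hk : k ≤ w.length) (h : k + 1 ≤ j) :
    (insAt w k c).getD j d = w.getD (j - 1) d := by
  rw [insAt, List.getD_append_right, List.length_take]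
  · rw [min_eq_left hk]
    have : j - k = (j - k - 1) + 1 := by omega
    rw [this]
    simp only [List.getD_cons_succ]
    rw [getD_drop]
    congr 1; omega
  · rw [List.length_take]; omega

lemma rk_dupAt_le {k i : ℕ} (hk : k < w.length) (h : i ≤ k) :
    rk (dupAt w k) i = rk w i := by
  apply rk_congr
  intro j hj
  rw [getD_dupAt_le _ hk (by omega), getD_dupAt_le _ hk (by omega)]

lemma rk_dupAt_ge {k i : ℕ} (hk : k < w.length) (h : k + 1 ≤ i) :
    rk (dupAt w k) i = rk w (i - 1) := by
  induction i with
  | zero => omega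
  | succ i ih =>
    rcases Nat.lt_or_ge k i with h' | h'
    · have e1 : (dupAt w k).getD (i+1) true = w.getD i true := by
        rw [getD_dupAt_ge _ hk (by omega)]; congr 1
      have e2 : (dupAt w k).getD i true = w.getD (i-1) true := getD_dupAt_ge _ hk (by omega)
      rw [rk_succ, ih (by omega), e1, e2]
      have hstep := rk_succ w (i-1)
      rw [show (i-1)+1 = i from by omega] at hstep
      rw [show i+1-1 = i from by omega, hstep]
    · have hik : i = k := by omega
      rw [rk_succ, hik, rk_dupAt_le hk (le_refl _)]
      have e1 : (dupAt w k).getD (k+1) true = w.getD k true := by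
        rw [getD_dupAt_ge _ hk (by omega)]; congr 1
      have e2 : (dupAt w k).getD k true = w.getD k true := getD_dupAt_le _ hk (le_refl _)
      rw [e1, e2]
      simp

lemma rk_insAt_le {k i : ℕ} {c : Bool} (hk1 : 1 ≤ k) (hk : k ≤ w.length) (h : i ≤ k - 1) :
    rk (insAt w k c) i = rk w i := by
  apply rk_congr
  intro j hj
  rw [getD_insAt_lt _ hk (by omega), getD_insAt_lt _ hk (by omega)]

lemma rk_insAt_k {k : ℕ} {c : Bool} (hk1 : 1 ≤ k) (hk : k ≤ w.length) :
    rk (insAt w k c) k = rk w (k-1) + (if c ≠ w.getD (k-1) true then 1 else 0) := by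
  have hs := rk_succ (insAt w k c) (k-1)
  rw [show k-1+1 = k from by omega] at hs
  rw [hs, rk_insAt_le hk1 hk (le_refl _), getD_insAt_self _ hk,
    getD_insAt_lt _ hk (by omega)]

lemma rk_insAt_k1 {k : ℕ} {c : Bool} (hk1 : 1 ≤ k) (hk : k ≤ w.length) :
    rk (insAt w k c) (k+1) = rk (insAt w k c) k + (if w.getD k true ≠ c then 1 else 0) := by
  rw [rk_succ, getD_insAt_self _ hk, getD_insAt_gt _ hk (le_refl _)]
  rw [show k+1-1 = k from by omega]

lemma rk_insAt_ge {k i : ℕ} {c : Bool} (hk1 : 1 ≤ k) (hk : k ≤ w.length) (h : k + 1 ≤ i) :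
    rk (insAt w k c) i + rk w k = rk w (i - 1) + rk (insAt w k c) (k+1) := by
  induction i with
  | zero => omega
  | succ i ih =>
    rcases Nat.lt_or_ge k i with h' | h'
    · have e1 : (insAt w k c).getD (i+1) true = w.getD i true := by
        rw [getD_insAt_gt _ hk (by omega)]; congr 1
      have e2 : (insAt w k c).getD i true = w.getD (i-1) true := getD_insAt_gt _ hk (by omega)
      rw [rk_succ, e1, e2]
      have hstep := rk_succ w (i-1)
      rw [show (i-1)+1 = i from by omega] at hstep
      rw [show i+1-1 = i from by omega, hstep]
      have := ih (by omega)
      omega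
    · have hik : i = k := by omega
      rw [hik]
      rw [show k+1-1 = k from by omega]
      omega

def IB (w : List Bool) : ℕ := rk w (w.length - 1)

lemma IB_dupAt {k : ℕ} (hk : k < w.length) : IB (dupAt w k) = IB w := by
  unfold IB
  rw [length_dupAt hk, show w.length + 1 - 1 = w.length from by omega,
    rk_dupAt_ge hk (by omega)]

lemma insAt_eq_dupAt_pred {k : ℕ} {c : Bool} (hk1 : 1 ≤ k) (hk : k < w.length)
    (hc : c = w.getD (k-1) true) : insAt w k c = dupAt w (k-1) := by
  unfold insAt dupAt
  rw [show k-1+1 = k from by omega, List.drop_eq_getElem_cons (show k-1 < w.length by omega)]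
  rw [show k-1+1 = k from by omega, hc, List.getD_eq_getElem _ _ (show k-1 < w.length by omega)]

lemma insAt_eq_dupAt_self {k : ℕ} {c : Bool} (hk : k < w.length)
    (hc : c = w.getD k true) : insAt w k c = dupAt w k := by
  unfold insAt dupAt
  rw [hc, List.getD_eq_getElem _ _ hk, List.take_succ, List.getElem?_eq_getElem hk,
    Option.toList_some, List.append_assoc, List.singleton_append]

lemma bool_tri (a b cc : Bool) :
    (if cc ≠ a then (1:ℕ) else 0) ≤ (if b ≠ a then 1 else 0) + (if cc ≠ b then 1 else 0) := by
  cases a <;> cases b <;> cases cc <;> simp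

lemma bool_tri_eq (a b cc : Bool)
    (h : (if b ≠ a then (1:ℕ) else 0) + (if cc ≠ b then 1 else 0) = (if cc ≠ a then 1 else 0)) :
    b = a ∨ b = cc := by
  cases a <;> cases b <;> cases cc <;> simp_all

lemma ins_IB {k : ℕ} {c : Bool} (hk1 : 1 ≤ k) (hk : k < w.length) :
    IB w ≤ IB (insAt w k c) ∧
    (IB (insAt w k c) = IB w → ∃ κ < w.length, insAt w k c = dupAt w κ) := by
  have hkle : k ≤ w.length := le_of_lt hk
  have hM : (insAt w k c).length = w.length + 1 := length_insAt c hkle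
  have h1 : IB (insAt w k c) = rk (insAt w k c) w.length := by
    rw [IB, hM, Nat.add_sub_cancel]
  have h2 := rk_insAt_ge (w := w) (c := c) hk1 hkle (i := w.length) (by omega)
  have h3 := rk_insAt_k1 (w := w) (c := c) hk1 hkle
  have h4 := rk_insAt_k (w := w) (c := c) hk1 hkle
  have h5 := rk_succ w (k-1)
  rw [show k-1+1 = k from by omega] at h5
  have hIBw : IB w = rk w (w.length - 1) := rfl
  have htri := bool_tri (w.getD (k-1) true) c (w.getD k true)
  constructor
  · omega
  · intro heq
    have heq2 : (if c ≠ w.getD (k-1) true then (1:ℕ) else 0) + (if w.getD k true ≠ c then 1 else 0)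
        = (if w.getD k true ≠ w.getD (k-1) true then 1 else 0) := by omega
    rcases bool_tri_eq _ _ _ heq2 with hc | hc
    · exact ⟨k-1, by omega, insAt_eq_dupAt_pred hk1 hk hc⟩
    · exact ⟨k, hk, insAt_eq_dupAt_self hk hc⟩

lemma getElem?_dupAt_le {k j : ℕ} (hk : k < w.length) (h : j ≤ k) :
    (dupAt w k)[j]? = w[j]? := by
  unfold dupAt
  rw [List.getElem?_append, List.length_take, if_pos (by omega), List.getElem?_take,
    if_pos (by omega)]

lemma getElem?_dupAt_ge {k j : ℕ} (hk : k < w.length) (h : k + 1 ≤ j) :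
    (dupAt w k)[j]? = w[j-1]? := by
  unfold dupAt
  rw [List.getElem?_append_right (by rw [List.length_take]; omega), List.length_take,
    List.getElem?_drop]
  congr 1
  omega

lemma dupAt_comm {k k' : ℕ} (h : k' ≤ k) (hk : k < w.length) :
    dupAt (dupAt w k) k' = dupAt (dupAt w k') (k+1) := by
  have hk' : k' < w.length := by omega
  have h1 : k + 1 < (dupAt w k').length := by rw [length_dupAt hk']; omega
  have h2 : k' < (dupAt w k).length := by rw [length_dupAt hk]; omega
  apply List.ext_getElem?
  intro j
  rcases Nat.lt_or_ge j (k'+1) with hj | hj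
  · rw [getElem?_dupAt_le h2 (by omega), getElem?_dupAt_le h1 (by omega),
      getElem?_dupAt_le hk (by omega), getElem?_dupAt_le hk' (by omega)]
  · rcases Nat.lt_or_ge j (k+2) with hj2 | hj2
    · rw [getElem?_dupAt_ge h2 (by omega), getElem?_dupAt_le h1 (by omega),
        getElem?_dupAt_le hk (by omega), getElem?_dupAt_ge hk' (by omega)]
    · rw [getElem?_dupAt_ge h2 (by omega), getElem?_dupAt_ge h1 (by omega),
        getElem?_dupAt_ge hk (by omega), getElem?_dupAt_ge hk' (by omega)]

lemma dupAt_succ_eq {k : ℕ} (h : k + 1 < w.length)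
    (hc : w.getD k true = w.getD (k+1) true) : dupAt w k = dupAt w (k+1) := by
  have hk : k < w.length := by omega
  apply List.ext_getElem?
  intro j
  rcases Nat.lt_or_ge j (k+1) with hj | hj
  · rw [getElem?_dupAt_le hk (by omega), getElem?_dupAt_le h (by omega)]
  · rcases Nat.lt_or_ge j (k+2) with hj2 | hj2
    · have hjk : j = k + 1 := by omega
      subst hjk
      rw [getElem?_dupAt_ge hk (by omega), getElem?_dupAt_le h (by omega)]
      rw [List.getD_eq_getElem _ _ hk, List.getD_eq_getElem _ _ h] at hc
      rw [show k+1-1 = k from by omega, List.getElem?_eq_getElem hk,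
        List.getElem?_eq_getElem h, hc]
    · rw [getElem?_dupAt_ge hk (by omega), getElem?_dupAt_ge h (by omega)]

lemma dupAt_rank_eq_le {k k' : ℕ} (hle : k ≤ k') (hk' : k' < w.length)
    (h : rk w k = rk w k') : dupAt w k = dupAt w k' := by
  induction k' with
  | zero =>
    have : k = 0 := by omega
    rw [this]
  | succ k' ih =>
    rcases Nat.lt_or_ge k (k'+1) with hlt | hge
    · have hmono1 : rk w k ≤ rk w k' := rk_mono w (by omega)
      have hmono2 : rk w k' ≤ rk w (k'+1) := rk_mono w (by omega)
      have heq : rk w k = rk w k' := by omega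
      have hstep : rk w (k'+1) = rk w k' := by omega
      rw [rk_succ] at hstep
      have hcc : w.getD k' true = w.getD (k'+1) true := by
        by_contra hne
        rw [if_pos (fun hh => hne hh.symm)] at hstep
        omega
      rw [ih (by omega) (by omega) heq]
      exact dupAt_succ_eq hk' hcc
    · have : k = k' + 1 := by omega
      rw [this]

lemma dupAt_rank_eq {k k' : ℕ} (hk : k < w.length) (hk' : k' < w.length)
    (h : rk w k = rk w k') : dupAt w k = dupAt w k' := by
  rcases le_total k k' with hle | hle
  · exact dupAt_rank_eq_le hle hk' h
  · exact (dupAt_rank_eq_le hle hk h.symm).symm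

end X

noncomputable def posR (w : List Bool) (t : ℕ) : ℕ := sInf {k | rk w k = t}

noncomputable def D (w : List Bool) (t : ℕ) : List Bool := dupAt w (posR w t)

section Y
variable {w : List Bool}

lemma dupAt_eq_D {k t : ℕ} (hk : k < w.length) (ht : rk w k = t) : dupAt w k = D w t := by
  have hex : {k | rk w k = t}.Nonempty := ⟨k, ht⟩
  have h1 : rk w (posR w t) = t := Nat.sInf_mem hex
  have h2 : posR w t ≤ k := Nat.sInf_le ht
  exact dupAt_rank_eq hk (by omega) (by omega)

lemma twodup {k1 k2 : ℕ} (hk1 : k1 < w.length) (hk2 : k2 < (dupAt w k1).length) :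
    dupAt (dupAt w k1) k2 =
      D (D w (max (rk w k1) (rk (dupAt w k1) k2))) (min (rk w k1) (rk (dupAt w k1) k2)) := by
  set t1 := rk w k1 with ht1
  set t2 := rk (dupAt w k1) k2 with ht2
  have hlen1 : (dupAt w k1).length = w.length + 1 := length_dupAt hk1
  rcases le_or_gt t2 t1 with hle | hlt
  · rw [max_eq_left hle, min_eq_right hle]
    have e2 : dupAt (dupAt w k1) k2 = D (dupAt w k1) t2 := dupAt_eq_D hk2 rfl
    have e1 : dupAt w k1 = D w t1 := dupAt_eq_D hk1 rfl
    rw [e2, e1]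
  · rw [max_eq_right (le_of_lt hlt), min_eq_left (le_of_lt hlt)]
    -- find position j of rank t2 in w
    have hb : t2 ≤ rk w (w.length - 1) := by
      have : t2 ≤ rk (dupAt w k1) ((dupAt w k1).length - 1) :=
        rk_mono _ (by omega)
      rw [hlen1, Nat.add_sub_cancel, rk_dupAt_ge hk1 (by omega)] at this
      exact this
    obtain ⟨j, hjle, hj⟩ := rk_ivt w (w.length - 1) t2 hb
    have hjw : j < w.length := by omega
    have hk1j : k1 < j := by
      by_contra hcon
      push_neg at hcon
      have := rk_mono w hcon
      omega
    have hrkj1 : rk (dupAt w k1) (j+1) = t2 := by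
      rw [rk_dupAt_ge hk1 (by omega), Nat.add_sub_cancel, hj]
    have hj1lt : j + 1 < (dupAt w k1).length := by omega
    have step1 : dupAt (dupAt w k1) k2 = dupAt (dupAt w k1) (j+1) :=
      dupAt_rank_eq hk2 hj1lt (by rw [hrkj1])
    have step2 : dupAt (dupAt w j) k1 = dupAt (dupAt w k1) (j+1) :=
      dupAt_comm (le_of_lt hk1j) hjw
    have step3 : dupAt w j = D w t2 := dupAt_eq_D hjw hj
    have hk1lt' : k1 < (dupAt w j).length := by rw [length_dupAt hjw]; omega
    have hrk4 : rk (dupAt w j) k1 = t1 := by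
      rw [rk_dupAt_le hjw (le_of_lt hk1j)]
    have step5 : dupAt (dupAt w j) k1 = D (dupAt w j) t1 := dupAt_eq_D hk1lt' hrk4
    rw [step1, ← step2, step5, step3]

end Y

lemma sum_Icc1 (n : ℕ) (f : ℕ → ℕ) : ∑ i ∈ Finset.Icc 1 n, f i = ∑ i ∈ Finset.range n, f (i+1) := by
  rw [← Finset.Ico_add_one_right_eq_Icc, Finset.sum_Ico_eq_sum_range]
  simp [add_comm]

lemma sum_ins_idx (F : ℕ → ℕ) (k N : ℕ) (hk : k ≤ N) :
    ∑ i ∈ Finset.range (N+1), (if i < k then F (i+1) else F i)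
      = (∑ i ∈ Finset.range N, F (i+1)) + F k := by
  induction N with
  | zero =>
    have : k = 0 := by omega
    subst this
    simp
  | succ N ih =>
    rw [Finset.sum_range_succ]
    rcases Nat.lt_or_ge k (N+1) with h | h
    · rw [ih (by omega), if_neg (by omega), Finset.sum_range_succ]
      ring
    · have hk' : k = N + 1 := by omega
      subst hk'
      rw [if_neg (by omega)]
      have : ∀ i ∈ Finset.range (N+1), (if i < N+1 then F (i+1) else F i) = F (i+1) := by
        intro i hi
        rw [if_pos (Finset.mem_range.mp hi)]
      rw [Finset.sum_congr rfl this]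

def Sg (g : ℕ → ℕ) (w : List Bool) : ℕ := ∑ i ∈ Finset.Icc 1 (w.length - 1), g (rk w i)

lemma Sg_dupAt (g : ℕ → ℕ) {w : List Bool} {k : ℕ} (hk : k < w.length) :
    Sg g (dupAt w k) = Sg g w + g (rk w k) := by
  have hw1 : 1 ≤ w.length := by omega
  unfold Sg
  rw [length_dupAt hk, Nat.add_sub_cancel, sum_Icc1, sum_Icc1]
  have hcongr : ∀ i ∈ Finset.range w.length,
      g (rk (dupAt w k) (i+1)) = if i < k then (fun i => g (rk w i)) (i+1) else (fun i => g (rk w i)) i := by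
    intro i _
    by_cases h : i < k
    · rw [if_pos h, rk_dupAt_le hk (by omega)]
    · rw [if_neg h, rk_dupAt_ge hk (by omega), Nat.add_sub_cancel]
  have hins := sum_ins_idx (fun i => g (rk w i)) k (w.length - 1) (by omega)
  rw [show w.length - 1 + 1 = w.length from by omega] at hins
  rw [Finset.sum_congr rfl hcongr, hins]


lemma pad_length (z : List Bool) : (pad z).length = z.length + 2 := by simp [pad]

lemma runRank_eq_rk (z : List Bool) (i : ℕ) : runRank z i = rk (pad z) i := rfl

lemma numRuns_eq_IB (z : List Bool) : numRuns z = IB (pad z) := by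
  have h : z.length + 2 - 1 = z.length + 1 := rfl
  rw [numRuns, runRank_eq_rk, IB, pad_length, h]

lemma f1r_eq_Sg (z : List Bool) : f1r z = Sg id (pad z) := by
  rw [f1r, Sg, pad_length]
  simp [runRank_eq_rk]

lemma f2r_eq_Sg (z : List Bool) : f2r z = Sg (fun r => r.choose 2) (pad z) := by
  rw [f2r, Sg, pad_length]
  simp [runRank_eq_rk]

lemma sublist_one {y x : List Bool} (h : y <+ x) (hl : x.length = y.length + 1) :
    ∃ u c v, y = u ++ v ∧ x = u ++ c :: v := by
  induction h with
  | slnil => simp at hl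
  | @cons l₁ l₂ a h ih =>
    simp at hl
    have : l₁ = l₂ := h.eq_of_length (by omega)
    exact ⟨[], a, l₁, by simp, by simp [this]⟩
  | @cons_cons l₁ l₂ a h ih =>
    simp at hl
    obtain ⟨u, c, v, h1, h2⟩ := ih hl
    exact ⟨a :: u, c, v, by simp [h1], by simp [h2]⟩

lemma sublist_mid {y x : List Bool} (h : y <+ x) (hl : y.length < x.length) :
    ∃ z, y <+ z ∧ z <+ x ∧ x.length = z.length + 1 := by
  induction h with
  | slnil => simp at hl
  | @cons l₁ l₂ a h ih =>
    rcases Nat.lt_or_ge l₁.length l₂.length with h' | h'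
    · obtain ⟨z, hz1, hz2, hz3⟩ := ih h'
      exact ⟨a :: z, hz1.cons a, hz2.cons₂ a, by simp [hz3]⟩
    · have : l₁ = l₂ := h.eq_of_length (Nat.le_antisymm h.length_le h')
      subst this
      exact ⟨l₁, List.Sublist.refl _, (List.Sublist.refl _).cons a, by simp⟩
  | @cons_cons l₁ l₂ a h ih =>
    simp at hl
    obtain ⟨z, hz1, hz2, hz3⟩ := ih hl
    exact ⟨a :: z, hz1.cons₂ a, hz2.cons₂ a, by simp [hz3]⟩

lemma pad_eq_insAt {u v : List Bool} (c : Bool) :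
    pad (u ++ c :: v) = insAt (pad (u ++ v)) (u.length + 1) c := by
  unfold pad insAt
  have h1 : (false :: (u ++ v)) ++ [true] = (false :: u) ++ (v ++ [true]) := by simp
  rw [h1, List.take_left' (by simp), List.drop_left' (by simp)]
  simp

lemma one_step {y z : List Bool} (h : y <+ z) (hl : z.length = y.length + 1) :
    numRuns y ≤ numRuns z ∧
    (numRuns z = numRuns y → ∃ κ < (pad y).length, pad z = dupAt (pad y) κ) := by
  obtain ⟨u, c, v, hy, hz⟩ := sublist_one h hl
  have hk1 : 1 ≤ u.length + 1 := by omega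
  have hklt : u.length + 1 < (pad y).length := by
    rw [hy, pad_length]
    simp
  have hins : pad z = insAt (pad y) (u.length + 1) c := by
    rw [hy, hz, pad_eq_insAt]
  have := ins_IB (w := pad y) (c := c) hk1 hklt
  rw [numRuns_eq_IB, numRuns_eq_IB, hins]
  exact this

lemma side {y X : List Bool} (hlen : X.length = y.length + 2) (hs : y <+ X)
    (hr : numRuns X = numRuns y) :
    ∃ t1 t2, pad X = D (D (pad y) (max t1 t2)) (min t1 t2) ∧
      f1r X = f1r y + (t1 + t2) ∧ f2r X = f2r y + (t1.choose 2 + t2.choose 2) := by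
  obtain ⟨z, hyz, hzx, hlz⟩ := sublist_mid hs (by omega)
  have hlz' : z.length = y.length + 1 := by omega
  have h1 := one_step hyz hlz'
  have h2 := one_step hzx (by omega)
  have he1 : numRuns z = numRuns y := by omega
  have he2 : numRuns X = numRuns z := by omega
  obtain ⟨κ1, hκ1, hd1⟩ := h1.2 he1
  obtain ⟨κ2, hκ2', hd2⟩ := h2.2 he2
  have hκ2 : κ2 < (dupAt (pad y) κ1).length := by rw [← hd1]; exact hκ2'
  have hpadX : pad X = dupAt (dupAt (pad y) κ1) κ2 := by rw [hd2, hd1]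
  refine ⟨rk (pad y) κ1, rk (dupAt (pad y) κ1) κ2, ?_, ?_, ?_⟩
  · rw [hpadX]
    exact twodup hκ1 hκ2
  · rw [f1r_eq_Sg, f1r_eq_Sg, hpadX, Sg_dupAt id hκ2, Sg_dupAt id hκ1]
    simp
    ring
  · rw [f2r_eq_Sg, f2r_eq_Sg, hpadX, Sg_dupAt _ hκ2, Sg_dupAt _ hκ1]
    ring

lemma two_mul_choose_two (n : ℕ) : 2 * n.choose 2 = n * (n - 1) := by
  induction n with
  | zero => rfl
  | succ n ih =>
    rw [Nat.choose_succ_succ, Nat.choose_one_right, Nat.mul_add, ih, Nat.succ_sub_one]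
    cases n with
    | zero => rfl
    | succ m =>
      simp only [Nat.add_sub_cancel]
      ring

lemma cast_mul_pred (n : ℕ) : ((n * (n - 1) : ℕ) : ℤ) = (n : ℤ) * ((n : ℤ) - 1) := by
  cases n with
  | zero => simp
  | succ m => push_cast [Nat.succ_sub_one]; ring

lemma pair_eq {a b c d : ℕ} (h1 : a + b = c + d)
    (h2 : a.choose 2 + b.choose 2 = c.choose 2 + d.choose 2) :
    (a = c ∧ b = d) ∨ (a = d ∧ b = c) := by
  have h2' : a * (a-1) + b * (b-1) = c * (c-1) + d * (d-1) := by
    have ha := two_mul_choose_two a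
    have hb := two_mul_choose_two b
    have hc := two_mul_choose_two c
    have hd := two_mul_choose_two d
    omega
  have e1 : (a : ℤ) + b = c + d := by exact_mod_cast h1
  have e2 : ((a*(a-1) + b*(b-1) : ℕ) : ℤ) = ((c*(c-1) + d*(d-1) : ℕ) : ℤ) := by
    exact_mod_cast h2'
  rw [Nat.cast_add, Nat.cast_add, cast_mul_pred, cast_mul_pred, cast_mul_pred,
    cast_mul_pred] at e2
  have e3 : (a:ℤ)^2 + (b:ℤ)^2 = (c:ℤ)^2 + (d:ℤ)^2 := by linear_combination e2 + e1
  have e4 : 2*((a:ℤ)*(b:ℤ)) = 2*((c:ℤ)*(d:ℤ)) := by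
    linear_combination ((a:ℤ)+b+c+d)*e1 - e3
  have e5 : 2*(((a:ℤ)-c)*((a:ℤ)-d)) = 0 := by linear_combination (2*(a:ℤ))*e1 - e4
  have e6 : ((a:ℤ)-c)*((a:ℤ)-d) = 0 := by linarith
  rcases mul_eq_zero.mp e6 with h | h
  · left
    have hac : a = c := by exact_mod_cast sub_eq_zero.mp h
    exact ⟨hac, by omega⟩
  · right
    have had : a = d := by exact_mod_cast sub_eq_zero.mp h
    exact ⟨had, by omega⟩

/-- Two deletions, where re-inserting the bits creates no new runs in either
`x` or `x'`: the values `f1r` and `f2r` determine the string uniquely. -/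
theorem two_deletions_no_new_runs_unique (n : ℕ) (x x' y : List Bool)
    (hx : x.length = n) (hx' : x'.length = n) (hy : y.length + 2 = n)
    (hsub : y.Sublist x) (hsub' : y.Sublist x')
    (hrun : numRuns x = numRuns y) (hrun' : numRuns x' = numRuns y)
    (hf1 : f1r x = f1r x') (hf2 : f2r x = f2r x') :
    x = x' := by
  have hlx : x.length = y.length + 2 := by omega
  have hlx' : x'.length = y.length + 2 := by omega
  obtain ⟨t1, t2, hxa, hx1, hx2⟩ := side hlx hsub hrun
  obtain ⟨s1, s2, hxa', hx1', hx2'⟩ := side hlx' hsub' hrun'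
  have hsum : t1 + t2 = s1 + s2 := by omega
  have hch : t1.choose 2 + t2.choose 2 = s1.choose 2 + s2.choose 2 := by omega
  have hmm : max t1 t2 = max s1 s2 ∧ min t1 t2 = min s1 s2 := by
    rcases pair_eq hsum hch with ⟨h1, h2⟩ | ⟨h1, h2⟩
    · rw [h1, h2]; exact ⟨rfl, rfl⟩
    · rw [h1, h2, max_comm, min_comm]; exact ⟨rfl, rfl⟩
  have hpp : pad x = pad x' := by rw [hxa, hxa', hmm.1, hmm.2]
  simp only [pad, List.cons_append, List.cons.injEq, List.append_left_inj] at hpp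
  exact hpp.2
end
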